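/- arXiv:2001.08312 — 2 statements merged into one kernel-verified Lean document; each statement's English description precedes it below -/
import Mathlib

section
/- Fix natural numbers u ≥ 1, k ≥ 1 and positive reals s_i < s_j. Let A be a finite set of positive real numbers. For a positive real t, define l_t = {(a₁, a₁², …, a₁^k, a₂, a₂², …, a₂^k) : a₁, a₂ ∈ A, a₂/a₁ = t} ⊆ ℝ^{2k}, and let u·l_t denote its u-fold sumset. Then every element of u·l_{s_i} + u·l_{s_j} has a unique representation as x + y with x ∈ u·l_{s_i}, y ∈ u·l_{s_j}; in particular |u·l_{s_i} + u·l_{s_j}| = |u·l_{s_i}| · |u·l_{s_j}|. -/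
open Finset Pointwise

/-- Sums `x + y` with `x ∈ u·l_{s_i}`, `y ∈ u·l_{s_j}` are all distinct, so the sumset
has cardinality `|u·l_{s_i}| * |u·l_{s_j}|`. -/
theorem stmt6 (k u : ℕ) (hk : 1 ≤ k) (hu : 1 ≤ u) (si sj : ℝ) (hsi : 0 < si) (hij : si < sj)
    (A : Finset ℝ) (hA : ∀ a ∈ A, 0 < a) :
    let l : ℝ → Finset ((Fin k → ℝ) × (Fin k → ℝ)) := fun t =>
      ((A ×ˢ A).filter fun p => p.2 / p.1 = t).image
        fun p => (fun j : Fin k => p.1 ^ (j.1 + 1), fun j : Fin k => p.2 ^ (j.1 + 1))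
    let us : Finset ((Fin k → ℝ) × (Fin k → ℝ)) → Finset ((Fin k → ℝ) × (Fin k → ℝ)) :=
      fun L => (Fintype.piFinset fun _ : Fin u => L).image fun f => ∑ i, f i
    (∀ x₁ ∈ us (l si), ∀ x₂ ∈ us (l si), ∀ y₁ ∈ us (l sj), ∀ y₂ ∈ us (l sj),
        x₁ + y₁ = x₂ + y₂ → x₁ = x₂ ∧ y₁ = y₂) ∧
      (us (l si) + us (l sj)).card = (us (l si)).card * (us (l sj)).card := by
  intro l us
  have key : ∀ t : ℝ, ∀ x ∈ us (l t), ∀ j : Fin k, x.2 j = t ^ (j.1 + 1) * x.1 j := by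
    intro t x hx j
    simp only [us, mem_image, Fintype.mem_piFinset] at hx
    obtain ⟨f, hf, rfl⟩ := hx
    have hterm : ∀ i : Fin u, (f i).2 j = t ^ (j.1 + 1) * (f i).1 j := by
      intro i
      have hi := hf i
      simp only [l, mem_image, mem_filter, mem_product] at hi
      obtain ⟨p, ⟨⟨hp1, hp2⟩, hpt⟩, hfi⟩ := hi
      rw [← hfi]
      have hp1pos := hA _ hp1
      have hp : p.2 = t * p.1 := by
        field_simp at hpt
        linarith [hpt]
      simp only [hp, mul_pow]
    simp only [Prod.snd_sum, Prod.fst_sum, Finset.sum_apply]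
    rw [Finset.mul_sum]
    exact Finset.sum_congr rfl fun i _ => hterm i
  have main : ∀ x₁ ∈ us (l si), ∀ x₂ ∈ us (l si), ∀ y₁ ∈ us (l sj), ∀ y₂ ∈ us (l sj),
      x₁ + y₁ = x₂ + y₂ → x₁ = x₂ ∧ y₁ = y₂ := by
    intro x₁ hx₁ x₂ hx₂ y₁ hy₁ y₂ hy₂ heq
    have h1 : ∀ j : Fin k, x₁.1 j + y₁.1 j = x₂.1 j + y₂.1 j := by
      intro j
      have := congrFun (congrArg Prod.fst heq) j
      simpa using this
    have h2 : ∀ j : Fin k, si ^ (j.1 + 1) * x₁.1 j + sj ^ (j.1 + 1) * y₁.1 j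
        = si ^ (j.1 + 1) * x₂.1 j + sj ^ (j.1 + 1) * y₂.1 j := by
      intro j
      have h := congrFun (congrArg Prod.snd heq) j
      simp only [Prod.snd_add, Pi.add_apply] at h
      rw [key si x₁ hx₁ j, key si x₂ hx₂ j, key sj y₁ hy₁ j, key sj y₂ hy₂ j] at h
      exact h
    have hfst : ∀ j : Fin k, x₁.1 j = x₂.1 j := by
      intro j
      have hne : si ^ (j.1 + 1) ≠ sj ^ (j.1 + 1) :=
        ne_of_lt (pow_lt_pow_left₀ hij hsi.le (Nat.succ_ne_zero _))
      have h3 : sj ^ (j.1 + 1) * (x₁.1 j + y₁.1 j) = sj ^ (j.1 + 1) * (x₂.1 j + y₂.1 j) := by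
        rw [h1 j]
      have h4 : (si ^ (j.1 + 1) - sj ^ (j.1 + 1)) * (x₁.1 j - x₂.1 j) = 0 := by
        linear_combination h2 j - h3
      rcases mul_eq_zero.mp h4 with h | h
      · exact absurd (sub_eq_zero.mp h) hne
      · exact sub_eq_zero.mp h
    have hx : x₁ = x₂ := by
      apply Prod.ext
      · funext j; exact hfst j
      · funext j
        rw [key si x₁ hx₁ j, key si x₂ hx₂ j, hfst j]
    refine ⟨hx, ?_⟩
    rw [hx] at heq
    exact add_left_cancel heq
  refine ⟨main, ?_⟩
  rw [Finset.add_def, Finset.card_image_of_injOn, Finset.card_product]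
  intro p hp q hq h
  simp only [mem_coe, mem_product] at hp hq
  obtain ⟨h1, h2⟩ := main p.1 hp.1 q.1 hq.1 p.2 hp.2 q.2 hq.2 h
  exact Prod.ext h1 h2
end

section
/- Let H be an abelian group and U, V finite nonempty subsets of H with |V| ≤ |U|. Partition U into disjoint subsets U₁, …, U_r with |U₁| = ⋯ = |U_{r−1}| = |V| and |U_r| ≤ |V|. Let W be a finite set containing U + V, and for v ∈ H let r(U, V; v) = |{(a, b) ∈ U × V : v = a + b}|. Then (Σ_{v ∈ W} r(U, V; v))² ≤ r² · |W| · max_{1 ≤ i ≤ r} E(U_i, V), where E(X, Y) = |{(x₁, y₁, x₂, y₂) ∈ X × Y × X × Y : x₁ + y₁ = x₂ + y₂}|. -/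
open Finset Pointwise

/-- Splitting `U` into `r` pieces of size at most `|V|` and applying Cauchy–Schwarz:
`(Σ_{v ∈ W} r(U,V;v))² ≤ r² |W| max_i E(U_i, V)`. -/
theorem stmt12 {H : Type*} [AddCommGroup H] [DecidableEq H] (U V W : Finset H)
    (hU : U.Nonempty) (hV : V.Nonempty) (hVU : V.card ≤ U.card)
    (r : ℕ) (hr : 1 ≤ r) (Us : Fin r → Finset H)
    (hdisj : ∀ i j, i ≠ j → Disjoint (Us i) (Us j))
    (hunion : ∀ x, x ∈ U ↔ ∃ i, x ∈ Us i)
    (hsize : ∀ i : Fin r, (i : ℕ) < r - 1 → (Us i).card = V.card)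
    (hsmall : ∀ i : Fin r, (Us i).card ≤ V.card)
    (hW : U + V ⊆ W) :
    (∑ v ∈ W, ((U ×ˢ V).filter fun p => v = p.1 + p.2).card) ^ 2 ≤
      r ^ 2 * W.card *
        (Finset.univ.sup fun i : Fin r =>
          (((Us i ×ˢ V) ×ˢ (Us i ×ˢ V)).filter
            fun q => q.1.1 + q.1.2 = q.2.1 + q.2.2).card) := by
  haveI : NeZero r := ⟨by omega⟩
  set N : Fin r → ℕ := fun i => ∑ v ∈ W, ((Us i ×ˢ V).filter fun p => v = p.1 + p.2).card
    with hN
  set E : Fin r → ℕ := fun i =>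
    (((Us i ×ˢ V) ×ˢ (Us i ×ˢ V)).filter fun q => q.1.1 + q.1.2 = q.2.1 + q.2.2).card with hE
  -- Step A : the total sum splits as ∑ i, N i
  have stepA : (∑ v ∈ W, ((U ×ˢ V).filter fun p => v = p.1 + p.2).card) = ∑ i, N i := by
    rw [Finset.sum_comm]
    refine Finset.sum_congr rfl fun v _ => ?_
    have hUV : U ×ˢ V = Finset.univ.biUnion fun i => Us i ×ˢ V := by
      ext ⟨a, b⟩
      simp only [Finset.mem_product, Finset.mem_biUnion, Finset.mem_univ, true_and, hunion]
      tauto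
    rw [hUV, Finset.filter_biUnion, Finset.card_biUnion]
    intro i _ j _ hij
    refine Finset.disjoint_left.2 fun p hp hp' => ?_
    simp only [Finset.mem_filter, Finset.mem_product] at hp hp'
    exact Finset.disjoint_left.1 (hdisj i j hij) hp.1.1 hp'.1.1
  -- Step B : Cauchy–Schwarz on each piece
  have stepB : ∀ i, (N i) ^ 2 ≤ W.card * E i := by
    intro i
    have hcs : (N i) ^ 2 ≤ W.card * ∑ v ∈ W,
        ((Us i ×ˢ V).filter fun p => v = p.1 + p.2).card ^ 2 := by
      simpa using Finset.sum_mul_sq_le_sq_mul_sq (R := ℕ) W 1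
        (fun v => ((Us i ×ˢ V).filter fun p => v = p.1 + p.2).card)
    refine hcs.trans (Nat.mul_le_mul_left _ ?_)
    -- ∑ r² ≤ E i
    have key : (W.biUnion fun v => ((Us i ×ˢ V).filter fun p => v = p.1 + p.2) ×ˢ
          ((Us i ×ˢ V).filter fun p => v = p.1 + p.2)) ⊆
        (((Us i ×ˢ V) ×ˢ (Us i ×ˢ V)).filter fun q => q.1.1 + q.1.2 = q.2.1 + q.2.2) := by
      intro q hq
      simp only [Finset.mem_biUnion, Finset.mem_product, Finset.mem_filter] at hq ⊢
      obtain ⟨v, _, ⟨h1, h2⟩, h3, h4⟩ := hq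
      exact ⟨⟨h1, h3⟩, by rw [← h2, ← h4]⟩
    have hdisj' : ∀ v ∈ W, ∀ w ∈ W, v ≠ w →
        Disjoint (((Us i ×ˢ V).filter fun p => v = p.1 + p.2) ×ˢ
            ((Us i ×ˢ V).filter fun p => v = p.1 + p.2))
          (((Us i ×ˢ V).filter fun p => w = p.1 + p.2) ×ˢ
            ((Us i ×ˢ V).filter fun p => w = p.1 + p.2)) := by
      intro v _ w _ hvw
      refine Finset.disjoint_left.2 fun q hq hq' => hvw ?_
      simp only [Finset.mem_product, Finset.mem_filter] at hq hq'
      rw [hq.1.2, hq'.1.2]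
    calc ∑ v ∈ W, ((Us i ×ˢ V).filter fun p => v = p.1 + p.2).card ^ 2
        = ∑ v ∈ W, (((Us i ×ˢ V).filter fun p => v = p.1 + p.2) ×ˢ
            ((Us i ×ˢ V).filter fun p => v = p.1 + p.2)).card := by
          simp [Finset.card_product, sq]
      _ = (W.biUnion fun v => ((Us i ×ˢ V).filter fun p => v = p.1 + p.2) ×ˢ
            ((Us i ×ˢ V).filter fun p => v = p.1 + p.2)).card :=
          (Finset.card_biUnion hdisj').symm
      _ ≤ E i := Finset.card_le_card key
  -- Step C : combine
  rw [stepA]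
  have hsum : ∑ i, N i ≤ r * Finset.univ.sup N := by
    calc ∑ i, N i ≤ (Finset.univ : Finset (Fin r)).card • Finset.univ.sup N :=
          Finset.sum_le_card_nsmul _ _ _ fun i _ => Finset.le_sup (Finset.mem_univ i)
      _ = r * Finset.univ.sup N := by simp [mul_comm]
  calc (∑ i, N i) ^ 2 ≤ (r * Finset.univ.sup N) ^ 2 := Nat.pow_le_pow_left hsum 2
    _ = r ^ 2 * (Finset.univ.sup N) ^ 2 := by ring
    _ ≤ r ^ 2 * (W.card * Finset.univ.sup E) := by
        refine Nat.mul_le_mul_left _ ?_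
        obtain ⟨i, _, hi⟩ := Finset.exists_mem_eq_sup (Finset.univ : Finset (Fin r))
          (Finset.univ_nonempty) N
        rw [hi]
        exact (stepB i).trans (Nat.mul_le_mul_left _ (Finset.le_sup (Finset.mem_univ i)))
    _ = r ^ 2 * W.card * Finset.univ.sup E := by ring
end
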